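/- Let n ∈ ℕ, r ≥ p−1, and let m_0 be a Walsh polynomial of order p^n − 1 satisfying condition (*), with polyphase components μ_{0,s}, and set b^{(0,s)}_{n,l} := μ_{0,s}(A^{1−n}(h_[l])) for s = 0,…,p−1 and l = 0,…,p^n−1. Then: (i) Σ_{s=0}^{p−1} |b^{(0,s)}_{n,l}|² ≤ 1 for every l = 0,…,p^n−1. (ii) Walsh polynomials m_1,…,m_r of order p^n − 1 satisfy M(ω)M*(ω) = I_p for all ω ∈ G if and only if their polyphase components are given by μ_{ν,s}(Aω) = Σ_{l=0}^{p^n−1} b^{(ν,s)}_{n,l} 1_{U_{n,l}}(ω) for ω ∈ U and s = 0,…,p−1, where the complex numbers b^{(ν,s)}_{n,l} (ν = 1,…,r) together with the b^{(0,s)}_{n,l} satisfy Σ_{ν=0}^{r} b^{(ν,s)}_{n,l} conj(b^{(ν,s')}_{n,l}) = δ_{s,s'} for all s, s' ∈ {0,…,p−1} and all l = 0,…,p^n−1. -/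

import Mathlib

open MeasureTheory Filter Topology Matrix

noncomputable section

namespace Vilenkin

/-- The underlying additive subgroup of `ℤ → ZMod p` consisting of sequences that
vanish for all sufficiently small indices. -/
def VilSub (p : ℕ) : AddSubgroup (ℤ → ZMod p) where
  carrier := {x | ∃ k : ℤ, ∀ j < k, x j = 0}
  zero_mem' := ⟨0, fun _ _ => rfl⟩
  add_mem' := by
    rintro a b ⟨ka, hka⟩ ⟨kb, hkb⟩
    refine ⟨min ka kb, fun j hj => ?_⟩
    have h1 := hka j (lt_of_lt_of_le hj (min_le_left _ _))
    have h2 := hkb j (lt_of_lt_of_le hj (min_le_right _ _))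
    show a j + b j = 0
    rw [h1, h2, add_zero]
  neg_mem' := by
    rintro a ⟨ka, hka⟩
    refine ⟨ka, fun j hj => ?_⟩
    show -a j = 0
    rw [hka j hj, neg_zero]

/-- The Vilenkin group `G = G_p`. -/
abbrev Vil (p : ℕ) := {x : ℤ → ZMod p // x ∈ VilSub p}

/-- The (iterated) shift automorphism: `Ash p t x` is `A^t x`, with `(A x)_j = x_{j+1}`. -/
def Ash (p : ℕ) (t : ℤ) (x : Vil p) : Vil p :=
  ⟨fun j => x.1 (j + t), by
    obtain ⟨k, hk⟩ := x.2
    exact ⟨k - t, fun j hj => hk (j + t) (by omega)⟩⟩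

/-- `λ(x) = Σ_j x_j p^{-j}`. -/
def lam (p : ℕ) (x : Vil p) : ℝ := ∑' j : ℤ, ((x.1 j).val : ℝ) * (p : ℝ) ^ (-j)

/-- `λ` restricted to `H` with values in `ℕ`:  `Σ_{i ≥ 0} x_{-i} p^i`. -/
def lamNat (p : ℕ) (x : Vil p) : ℕ := ∑' i : ℕ, (x.1 (-(i : ℤ))).val * p ^ i

/-- The element `h_[α]` of `H` with `λ(h_[α]) = α` (base-`p` digits of `α`). -/
def hElt (p : ℕ) (α : ℕ) : Vil p :=
  ⟨fun j => if j ≤ 0 then ((α / p ^ (-j).toNat : ℕ) : ZMod p) else 0, by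
    refine ⟨-(α : ℤ), fun j hj => ?_⟩
    have hj0 : j ≤ 0 := by omega
    show (if j ≤ 0 then ((α / p ^ (-j).toNat : ℕ) : ZMod p) else 0) = 0
    rw [if_pos hj0]
    rcases Nat.lt_or_ge p 2 with hp | hp
    · interval_cases p
      · have hn : (-j).toNat ≠ 0 := by omega
        simp [zero_pow hn]
      · exact Subsingleton.elim _ _
    · have hn : α < (-j).toNat := by omega
      have h2 : α < 2 ^ (-j).toNat := lt_trans hn (by first | exact Nat.lt_two_pow_self | exact Nat.lt_two_pow_self _)
      have hpow : α < p ^ (-j).toNat :=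
        lt_of_lt_of_le h2 (Nat.pow_le_pow_left hp _)
      rw [Nat.div_eq_of_lt hpow]
      simp⟩

/-- The character `χ(x, ω) = exp((2πi/p) Σ_j x_j ω_{1-j})`. -/
def chi (p : ℕ) (x ω : Vil p) : ℂ :=
  Complex.exp ((2 * Real.pi * Complex.I / p) *
    ∑' j : ℤ, (((x.1 j).val : ℂ) * ((ω.1 (1 - j)).val : ℂ)))

/-- The generalized Walsh function `W_α(x) = χ(x, h_[α])`. -/
def Walsh (p : ℕ) (α : ℕ) (x : Vil p) : ℂ := chi p x (hElt p α)

/-- The element `δ_l` of `G` with `λ(δ_l) = l / p`. -/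
def deltaElt (p : ℕ) (l : ℕ) : Vil p :=
  ⟨fun j => if j = 1 then (l : ZMod p) else 0, ⟨1, fun j hj => if_neg (by omega)⟩⟩

/-- `U_l = {x : x_j = 0 for j ≤ l}`. -/
def Uball (p : ℕ) (l : ℤ) : Set (Vil p) := {x | ∀ j ≤ l, x.1 j = 0}

/-- `U = U_0`. -/
def Uset (p : ℕ) : Set (Vil p) := Uball p 0

/-- `H = {x : x_j = 0 for j > 0}`. -/
def Hset (p : ℕ) : Set (Vil p) := {x | ∀ j : ℤ, 0 < j → x.1 j = 0}

/-- The non-Archimedean norm `‖x‖ = p^{-k(x)}`, `‖θ‖ = 0`. -/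
def vnorm (p : ℕ) (x : Vil p) : ℝ := ⨆ j : ℤ, (if x.1 j ≠ 0 then (p : ℝ) ^ (-j) else 0)

/-- The Vilenkin topology, generated by the cosets of the subgroups `U_l`. -/
instance (p : ℕ) : TopologicalSpace (Vil p) :=
  TopologicalSpace.generateFrom
    {S | ∃ (x : Vil p) (l : ℤ), S = {y : Vil p | ∀ j ≤ l, y.1 j = x.1 j}}

instance (p : ℕ) : MeasurableSpace (Vil p) := borel (Vil p)

/-- `μ` is the Haar measure on `G`: translation invariant and normalized by `μ(U) = 1`. -/
def IsHaar (p : ℕ) (μ : Measure (Vil p)) : Prop :=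
  (∀ (a : Vil p) (s : Set (Vil p)), μ ((fun x => a + x) ⁻¹' s) = μ s) ∧ μ (Uset p) = 1

/-- The Fourier transform (integral form) `f̂(ω) = ∫ f(x) conj χ(x,ω) dμ(x)`. -/
def FT (p : ℕ) (μ : Measure (Vil p)) (f : Vil p → ℂ) (ω : Vil p) : ℂ :=
  ∫ x, f x * (starRingEnd ℂ) (chi p x ω) ∂μ

/-- The `L²` inner product `⟨f, g⟩ = ∫ f conj g dμ`. -/
def ip (p : ℕ) (μ : Measure (Vil p)) (f g : Vil p → ℂ) : ℂ :=
  ∫ x, f x * (starRingEnd ℂ) (g x) ∂μ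

/-- The dilated-translated system `ψ_{j,k}(x) = p^{j/2} ψ(A^j x ⊖ h_[k])`. -/
def wsys (p : ℕ) (ψ : Vil p → ℂ) (j : ℤ) (k : ℕ) (x : Vil p) : ℂ :=
  ((Real.sqrt p ^ j : ℝ) : ℂ) * ψ (Ash p j x - hElt p k)

/-- `m` is the Walsh polynomial of order `p^n - 1` with coefficients `a`. -/
def IsWalshPolyOfOrder (p n : ℕ) (a : ℕ → ℂ) (m : Vil p → ℂ) : Prop :=
  ∀ ω, m ω = ∑ α ∈ Finset.range (p ^ n), a α * (starRingEnd ℂ) (Walsh p α ω)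

/-- `m` is a Walsh polynomial. -/
def IsWalshPoly (p : ℕ) (m : Vil p → ℂ) : Prop :=
  ∃ n a, IsWalshPolyOfOrder p n a m

/-- The polyphase component `μ_{ν,s}(ω) = √p Σ_{α < p^{n-1}} a_{pα+s} conj W_α(ω)`. -/
def polyphase (p n : ℕ) (a : ℕ → ℂ) (s : ℕ) (ω : Vil p) : ℂ :=
  (Real.sqrt p : ℂ) *
    ∑ α ∈ Finset.range (p ^ (n - 1)), a (p * α + s) * (starRingEnd ℂ) (Walsh p α ω)

/-- The matrix `M(ω)` with entries `M(ω)_{l,ν} = m_ν(ω ⊕ δ_l)`. -/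
def MaskMatrix (p r : ℕ) (m : Fin (r + 1) → Vil p → ℂ) (ω : Vil p) :
    Matrix (Fin p) (Fin (r + 1)) ℂ :=
  Matrix.of fun l ν => m ν (ω + deltaElt p (l : ℕ))

/-- The unitary extension condition `M(ω) M(ω)* = I_p` for all `ω`. -/
def UEP (p r : ℕ) (m : Fin (r + 1) → Vil p → ℂ) : Prop :=
  ∀ ω : Vil p, MaskMatrix p r m ω * (MaskMatrix p r m ω)ᴴ = 1

/-- Condition (*): `Σ_{l<p} |m_0(ω ⊕ δ_l)|² ≤ 1` for all `ω`. -/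
def StarCond (p : ℕ) (m0 : Vil p → ℂ) : Prop :=
  ∀ ω : Vil p, ∑ l ∈ Finset.range p, ‖m0 (ω + deltaElt p l)‖ ^ 2 ≤ 1

/-- `φ` satisfies the refinement equation with coefficients `a` (of length `p^n`). -/
def RefinableWithMask (p n : ℕ) (a : ℕ → ℂ) (φ : Vil p → ℂ) : Prop :=
  ∀ x, φ x = p * ∑ α ∈ Finset.range (p ^ n), a α * φ (Ash p 1 x - hElt p α)

/-- The coset `U_{n,l} = A^{-n}(h_[l]) ⊕ A^{-n}(U)`. -/
def Unl (p : ℕ) (n l : ℕ) : Set (Vil p) :=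
  (fun u => Ash p (-(n : ℤ)) (hElt p l) + Ash p (-(n : ℤ)) u) '' Uset p

/-- Membership in the Sobolev space `W₂^m`, phrased in terms of (a representative of)
the Fourier transform `fhat` of `f`. -/
def MemW2 (p : ℕ) (μ : Measure (Vil p)) (m : ℕ) (fhat : Vil p → ℂ) : Prop :=
  ∀ k ≤ m, Integrable (fun ω => vnorm p ω ^ (2 * k) * ‖fhat ω‖ ^ 2) μ

/-- The Sobolev norm `‖f‖_{2,m}`, phrased via the Fourier transform `fhat` of `f`. -/
def sobNorm (p : ℕ) (μ : Measure (Vil p)) (m : ℕ) (fhat : Vil p → ℂ) : ℝ :=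
  ∑ k ∈ Finset.range (m + 1), Real.sqrt (∫ ω, vnorm p ω ^ (2 * k) * ‖fhat ω‖ ^ 2 ∂μ)

end Vilenkin

/-!
Splitting the Walsh index as `α = p β + s` factors each mask as
`m_ν(ω ⊕ δ_l) = Σ_s F(ω)_{l,s} μ_{ν,s}(Aω)`, where `F(ω)` is the DFT matrix of `ZMod p` with rows
twisted by `ω_1`, hence unitary. So `M(ω) = F(ω) P(ω)` with `P(ω)_{s,ν} = μ_{ν,s}(Aω)`:
`M M* = I` iff `P P* = I`, and `F` preserves column norms, which turns (*) into (i).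
Since `μ_{ν,s}(Aω)` only depends on `ω_2, …, ω_n`, `P` is constant on each coset `U_{n,l}`; these
`p^n` cosets realise every value of `(ω_1, …, ω_n)` exactly once, so `P P* = I` holds everywhere
iff it holds at the representatives `A^{-n} h_[l]`, which is the orthonormality of the
`b^{(ν,s)}_{n,l}`.
-/

theorem Finset.sum_range_mul_eq_sum_sum {M : Type*} [AddCommMonoid M] (f : ℕ → M) (k m : ℕ) :
    ∑ α ∈ Finset.range (k * m), f α
      = ∑ s ∈ Finset.range k, ∑ β ∈ Finset.range m, f (k * β + s) := by
  induction m with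
  | zero => simp
  | succ m ih =>
    simp only [Nat.mul_succ, Finset.sum_range_add, ih, Finset.sum_range_succ,
      Finset.sum_add_distrib]

theorem Nat.mod_pow_eq_of_digits_eq {b l l' n : ℕ} (h : ∀ i < n, l / b ^ i % b = l' / b ^ i % b) :
    l % b ^ n = l' % b ^ n := by
  induction n with
  | zero => simp [Nat.mod_one]
  | succ n ih =>
    rw [Nat.mod_pow_succ, Nat.mod_pow_succ, ih fun i hi => h i (by omega), h n (by omega)]

section UnitaryMatrix

open Matrix

variable {m k : Type*} [Fintype m] [DecidableEq m]

theorem Matrix.mul_mul_conjTranspose_eq_one_iff {α : Type*} [CommRing α] [StarRing α]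
    [Fintype k] {U : Matrix m m α} (hU : U ∈ unitaryGroup m α) (P : Matrix m k α) :
    U * P * (U * P)ᴴ = 1 ↔ P * Pᴴ = 1 := by
  have hUU : U * star U = 1 := mem_unitaryGroup_iff.mp hU
  have hUU' : star U * U = 1 := mem_unitaryGroup_iff'.mp hU
  have hconj : U * P * (U * P)ᴴ = U * (P * Pᴴ) * star U := by
    rw [conjTranspose_mul, star_eq_conjTranspose]
    simp only [Matrix.mul_assoc]
  rw [hconj]
  refine ⟨fun h => ?_, fun h => by rw [h, Matrix.mul_one, hUU]⟩
  calc P * Pᴴ = star U * (U * (P * Pᴴ) * star U) * U := by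
        simp only [← Matrix.mul_assoc, hUU', Matrix.one_mul]
        rw [Matrix.mul_assoc, hUU', Matrix.mul_one]
    _ = 1 := by rw [h, Matrix.mul_one, hUU']

theorem Matrix.sum_norm_sq_unitary_mul_apply {U : Matrix m m ℂ} (hU : U ∈ unitaryGroup m ℂ)
    (P : Matrix m k ℂ) (j : k) : ∑ i, ‖(U * P) i j‖ ^ 2 = ∑ i, ‖P i j‖ ^ 2 := by
  have hdiag (A : Matrix m k ℂ) : ((∑ i, ‖A i j‖ ^ 2 : ℝ) : ℂ) = (Aᴴ * A) j j := by
    simp [Matrix.mul_apply, Complex.conj_mul']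
  have hgram : (U * P)ᴴ * (U * P) = Pᴴ * P := by
    rw [conjTranspose_mul, Matrix.mul_assoc, ← Matrix.mul_assoc Uᴴ, ← star_eq_conjTranspose,
      mem_unitaryGroup_iff'.mp hU, Matrix.one_mul]
  exact_mod_cast (hdiag (U * P)).trans (hgram ▸ hdiag P).symm

end UnitaryMatrix

namespace ZMod

variable {N : ℕ} [NeZero N]

lemma stdAddChar_natCast (j : ℕ) :
    stdAddChar (j : ZMod N) = Complex.exp (2 * Real.pi * Complex.I * j / N) := by
  simpa using stdAddChar_coe (N := N) (j : ℤ)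

lemma bijective_natCast_fin : Function.Bijective fun s : Fin N => ((s : ℕ) : ZMod N) := by
  rw [Fintype.bijective_iff_injective_and_card, card, Fintype.card_fin]
  refine ⟨fun s t h => Fin.ext ?_, rfl⟩
  simpa [val_natCast_of_lt s.isLt, val_natCast_of_lt t.isLt] using congrArg val h

lemma sum_fin_stdAddChar_mul (b : ZMod N) :
    ∑ s : Fin N, stdAddChar (((s : ℕ) : ZMod N) * b) = if b = 0 then (N : ℂ) else 0 := by
  rw [Fintype.sum_bijective _ bijective_natCast_fin _ (fun z => stdAddChar (z * b)) fun _ => rfl,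
    AddChar.sum_mulShift b (isPrimitive_stdAddChar N), card]
  split_ifs <;> simp

end ZMod

namespace Vilenkin

open ZMod (stdAddChar)

section Coordinates

variable {p : ℕ}

@[simp] lemma add_apply (x y : Vil p) (j : ℤ) : (x + y).1 j = x.1 j + y.1 j := rfl

@[simp] lemma Ash_apply (t : ℤ) (x : Vil p) (j : ℤ) : (Ash p t x).1 j = x.1 (j + t) := rfl

lemma Ash_Ash (t u : ℤ) (x : Vil p) : Ash p t (Ash p u x) = Ash p (t + u) x :=
  Subtype.ext <| funext fun j => congrArg x.1 (add_assoc j t u)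

lemma Ash_zero (x : Vil p) : Ash p 0 x = x :=
  Subtype.ext <| funext fun j => congrArg x.1 (add_zero j)

@[simp] lemma deltaElt_apply_one (l : ℕ) : (deltaElt p l).1 1 = l := rfl

lemma deltaElt_apply_of_ne_one (l : ℕ) {j : ℤ} (hj : j ≠ 1) : (deltaElt p l).1 j = 0 :=
  if_neg hj

lemma hElt_apply_of_pos (α : ℕ) {j : ℤ} (hj : 0 < j) : (hElt p α).1 j = 0 :=
  if_neg (not_le.mpr hj)

lemma hElt_apply_neg (α i : ℕ) : (hElt p α).1 (-i) = ((α / p ^ i : ℕ) : ZMod p) := by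
  simp [hElt]

lemma hElt_apply_neg_of_lt_pow [NeZero p] {n α : ℕ} (hα : α < p ^ n) {i : ℕ} (hi : n ≤ i) :
    (hElt p α).1 (-i) = 0 := by
  rw [hElt_apply_neg, Nat.div_eq_of_lt (hα.trans_le (Nat.pow_le_pow_right (NeZero.pos p) hi)),
    Nat.cast_zero]

end Coordinates

section Walsh

variable {p : ℕ} [NeZero p]

theorem Walsh_eq_stdAddChar {n α : ℕ} (hα : α < p ^ n) (x : Vil p) :
    Walsh p α x = stdAddChar (∑ i ∈ Finset.range n, x.1 (i + 1) * (hElt p α).1 (-i)) := by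
  let succEmb : ℕ ↪ ℤ := ⟨fun i => i + 1, fun i i' h => by simpa using h⟩
  have hsupp : ∀ j ∉ (Finset.range n).map succEmb,
      ((x.1 j).val : ℂ) * ((hElt p α).1 (1 - j)).val = 0 := by
    intro j hj
    simp only [Finset.mem_map, Finset.mem_range, succEmb] at hj
    rcases le_or_gt j 0 with hj0 | hj0
    · simp [hElt_apply_of_pos α (by omega : 0 < 1 - j)]
    · obtain ⟨i, rfl⟩ : ∃ i : ℕ, j = i + 1 := ⟨(j - 1).toNat, by omega⟩
      have hi : n ≤ i := by by_contra h; exact hj ⟨i, by omega, rfl⟩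
      simp [show (1 : ℤ) - (i + 1) = -i by ring, hElt_apply_neg_of_lt_pow hα hi]
  have hterm : ∀ i ∈ Finset.range n,
      ((x.1 (succEmb i)).val : ℂ) * ((hElt p α).1 (1 - succEmb i)).val
        = (((x.1 (i + 1)).val * ((hElt p α).1 (-i)).val : ℕ) : ℂ) := fun i _ => by
    rw [Nat.cast_mul, show (1 : ℤ) - succEmb i = -i from by show (1 : ℤ) - (i + 1) = -i; ring]
    rfl
  have hcast : ∑ i ∈ Finset.range n, x.1 (i + 1) * (hElt p α).1 (-i)
      = ((∑ i ∈ Finset.range n, (x.1 (i + 1)).val * ((hElt p α).1 (-i)).val : ℕ) : ZMod p) := by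
    push_cast [ZMod.natCast_val, ZMod.cast_id]
    rfl
  rw [Walsh, chi, tsum_eq_sum hsupp, Finset.sum_map, Finset.sum_congr rfl hterm, hcast,
    ZMod.stdAddChar_natCast]
  push_cast
  ring_nf

lemma Walsh_congr {n α : ℕ} (hα : α < p ^ n) {x y : Vil p}
    (h : ∀ i < n, x.1 (i + 1) = y.1 (i + 1)) : Walsh p α x = Walsh p α y := by
  rw [Walsh_eq_stdAddChar hα, Walsh_eq_stdAddChar hα]
  exact congrArg _ (Finset.sum_congr rfl fun i hi => by rw [h i (Finset.mem_range.mp hi)])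

lemma Walsh_mul_add {n β s : ℕ} (hβ : β < p ^ n) (hs : s < p) (x : Vil p) :
    Walsh p (p * β + s) x = stdAddChar (x.1 1 * (s : ZMod p)) * Walsh p β (Ash p 1 x) := by
  have hlt : p * β + s < p ^ (n + 1) :=
    calc p * β + s < p * (β + 1) := by rw [Nat.mul_succ]; omega
      _ ≤ p ^ (n + 1) := by rw [pow_succ']; exact Nat.mul_le_mul_left p hβ
  have hdigit (i : ℕ) : (p * β + s) / p ^ (i + 1) = β / p ^ i := by
    rw [pow_succ', ← Nat.div_div_eq_div_mul, Nat.mul_add_div (NeZero.pos p),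
      Nat.div_eq_of_lt hs, add_zero]
  rw [Walsh_eq_stdAddChar hlt, Walsh_eq_stdAddChar hβ, Finset.sum_range_succ', add_comm,
    AddChar.map_add_eq_mul]
  congr 2
  · rw [hElt_apply_neg]
    simp
  · refine Finset.sum_congr rfl fun i _ => ?_
    rw [hElt_apply_neg, hElt_apply_neg, hdigit, Ash_apply]
    push_cast
    ring_nf

lemma polyphase_congr {N : ℕ} (a : ℕ → ℂ) (s : ℕ) {x y : Vil p}
    (h : ∀ i < N - 1, x.1 (i + 1) = y.1 (i + 1)) :
    polyphase p N a s x = polyphase p N a s y := by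
  unfold polyphase
  congr 1
  exact Finset.sum_congr rfl fun β hβ => by rw [Walsh_congr (Finset.mem_range.mp hβ) h]

end Walsh

section Polyphase

variable {p : ℕ} [NeZero p]

theorem IsWalshPolyOfOrder.eq_sum_polyphase {N : ℕ} (hN : 1 ≤ N) {a : ℕ → ℂ} {m : Vil p → ℂ}
    (hm : IsWalshPolyOfOrder p N a m) (x : Vil p) :
    m x = (Real.sqrt p : ℂ)⁻¹ * ∑ s ∈ Finset.range p,
      starRingEnd ℂ (stdAddChar (x.1 1 * (s : ZMod p))) * polyphase p N a s (Ash p 1 x) := by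
  obtain ⟨n, rfl⟩ := Nat.exists_eq_add_of_le' hN
  have hsqrt : (Real.sqrt p : ℂ) ≠ 0 := by
    exact_mod_cast (Real.sqrt_pos.mpr (Nat.cast_pos.mpr (NeZero.pos p))).ne'
  rw [hm x, pow_succ', Finset.sum_range_mul_eq_sum_sum, Finset.mul_sum]
  refine Finset.sum_congr rfl fun s hs => ?_
  rw [polyphase, Nat.add_sub_cancel, mul_left_comm _ (Real.sqrt p : ℂ), ← mul_assoc,
    inv_mul_cancel₀ hsqrt, one_mul, Finset.mul_sum]
  refine Finset.sum_congr rfl fun β hβ => ?_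
  rw [Walsh_mul_add (Finset.mem_range.mp hβ) (Finset.mem_range.mp hs), map_mul]
  ring

end Polyphase

section MaskFactorization

open Matrix

variable {p : ℕ} [NeZero p]

def dftFactor (ω : Vil p) : Matrix (Fin p) (Fin p) ℂ :=
  Matrix.of fun l s =>
    (Real.sqrt p : ℂ)⁻¹ *
      starRingEnd ℂ (stdAddChar ((ω.1 1 + ((l : ℕ) : ZMod p)) * ((s : ℕ) : ZMod p)))

lemma dftFactor_mem_unitaryGroup (ω : Vil p) : dftFactor ω ∈ unitaryGroup (Fin p) ℂ := by
  rw [mem_unitaryGroup_iff]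
  ext l l'
  have hsqrt : (Real.sqrt p : ℂ)⁻¹ * starRingEnd ℂ (Real.sqrt p : ℂ)⁻¹ = (p : ℂ)⁻¹ := by
    rw [map_inv₀, Complex.conj_ofReal, ← mul_inv, ← Complex.ofReal_mul,
      Real.mul_self_sqrt (Nat.cast_nonneg p), Complex.ofReal_natCast]
  have hterm (s : Fin p) : dftFactor ω l s * star (dftFactor ω l' s)
      = (p : ℂ)⁻¹ *
        stdAddChar (((s : ℕ) : ZMod p) * (((l' : ℕ) : ZMod p) - ((l : ℕ) : ZMod p))) := by
    simp only [dftFactor, of_apply, star_mul', RCLike.star_def, Complex.conj_conj]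
    rw [mul_mul_mul_comm, hsqrt, ← AddChar.map_neg_eq_conj, ← AddChar.map_add_eq_mul]
    ring_nf
  have hinj : ((l' : ℕ) : ZMod p) - ((l : ℕ) : ZMod p) = 0 ↔ l = l' := by
    rw [sub_eq_zero, ZMod.bijective_natCast_fin.injective.eq_iff, eq_comm]
  simp only [mul_apply, star_apply, hterm, ← Finset.mul_sum, ZMod.sum_fin_stdAddChar_mul, hinj,
    one_apply]
  split_ifs <;> simp [NeZero.ne p]

def polyphaseMatrix (p N r : ℕ) (a : Fin (r + 1) → ℕ → ℂ) (ω : Vil p) :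
    Matrix (Fin p) (Fin (r + 1)) ℂ :=
  Matrix.of fun s ν => polyphase p N (a ν) s (Ash p 1 ω)

variable {N r : ℕ} {a : Fin (r + 1) → ℕ → ℂ} {mks : Fin (r + 1) → Vil p → ℂ}

theorem MaskMatrix_eq_dftFactor_mul (hN : 1 ≤ N) (hWP : ∀ ν, IsWalshPolyOfOrder p N (a ν) (mks ν))
    (ω : Vil p) : MaskMatrix p r mks ω = dftFactor ω * polyphaseMatrix p N r a ω := by
  ext l ν
  have hshift (s : ℕ) : polyphase p N (a ν) s (Ash p 1 (ω + deltaElt p l))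
      = polyphase p N (a ν) s (Ash p 1 ω) :=
    polyphase_congr _ _ fun i _ => by
      simp [deltaElt_apply_of_ne_one l (by omega : (i : ℤ) + 1 + 1 ≠ 1)]
  rw [MaskMatrix, of_apply, (hWP ν).eq_sum_polyphase hN, mul_apply, Finset.sum_range,
    Finset.mul_sum]
  refine Finset.sum_congr rfl fun s _ => ?_
  simp only [dftFactor, polyphaseMatrix, of_apply, hshift, add_apply, deltaElt_apply_one]
  ring

theorem UEP_iff_polyphaseMatrix (hN : 1 ≤ N) (hWP : ∀ ν, IsWalshPolyOfOrder p N (a ν) (mks ν)) :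
    UEP p r mks ↔ ∀ ω, polyphaseMatrix p N r a ω * (polyphaseMatrix p N r a ω)ᴴ = 1 :=
  forall_congr' fun ω => by
    rw [MaskMatrix_eq_dftFactor_mul hN hWP,
      mul_mul_conjTranspose_eq_one_iff (dftFactor_mem_unitaryGroup ω)]

theorem sum_norm_sq_polyphase (hN : 1 ≤ N) {a : ℕ → ℂ} {m : Vil p → ℂ}
    (hm : IsWalshPolyOfOrder p N a m) (ω : Vil p) :
    ∑ s ∈ Finset.range p, ‖polyphase p N a s (Ash p 1 ω)‖ ^ 2
      = ∑ l ∈ Finset.range p, ‖m (ω + deltaElt p l)‖ ^ 2 := by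
  have h := sum_norm_sq_unitary_mul_apply (dftFactor_mem_unitaryGroup ω)
    (polyphaseMatrix p N 0 (fun _ => a) ω) 0
  rw [← MaskMatrix_eq_dftFactor_mul hN (mks := fun _ => m) fun _ => hm] at h
  simpa [MaskMatrix, polyphaseMatrix, Finset.sum_range] using h.symm

end MaskFactorization

section Cosets

variable {p : ℕ}

def window (n : ℕ) (x : Vil p) : Fin n → ZMod p := fun i => x.1 (n - i)

lemma window_eq_window_iff {n : ℕ} {x y : Vil p} :
    window n x = window n y ↔ ∀ j : ℤ, 1 ≤ j → j ≤ n → x.1 j = y.1 j := by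
  refine ⟨fun h j hj hjn => ?_, fun h => funext fun i => h _ (by omega) (by omega)⟩
  have := congrFun h ⟨(n - j).toNat, by omega⟩
  rwa [window, window, show (n : ℤ) - ((n - j).toNat : ℕ) = j by omega] at this

lemma Ash_one_Ash_neg (n : ℕ) (x : Vil p) : Ash p 1 (Ash p (-n) x) = Ash p (1 - n) x := by
  rw [Ash_Ash, ← sub_eq_add_neg]

lemma mem_Unl_iff {n l : ℕ} {x : Vil p} :
    x ∈ Unl p n l ↔ ∀ j ≤ (n : ℤ), x.1 j = (Ash p (-n) (hElt p l)).1 j := by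
  constructor
  · rintro ⟨u, hu, rfl⟩ j hj
    simp [hu (j + -n) (by omega)]
  · intro h
    refine ⟨Ash p n (x - Ash p (-n) (hElt p l)), fun j hj => ?_, ?_⟩
    · simp [h (j + n) (by omega)]
    · dsimp only
      rw [Ash_Ash, neg_add_cancel, Ash_zero, add_sub_cancel]

lemma Ash_neg_hElt_mem_Unl (n l : ℕ) : Ash p (-n) (hElt p l) ∈ Unl p n l :=
  mem_Unl_iff.mpr fun _ _ => rfl

lemma window_Ash_neg_hElt (n l : ℕ) (i : Fin n) :
    window n (Ash p (-n) (hElt p l)) i = ((l / p ^ (i : ℕ) : ℕ) : ZMod p) := by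
  rw [window, Ash_apply, show (n : ℤ) - (i : ℕ) + -n = -((i : ℕ) : ℤ) by ring, hElt_apply_neg]

variable [NeZero p]

lemma Ash_neg_hElt_mem_Uset {n l : ℕ} (hl : l < p ^ n) : Ash p (-n) (hElt p l) ∈ Uset p := by
  intro j hj
  rw [Ash_apply, show j + -n = -(((n : ℤ) - j).toNat : ℕ) by omega]
  exact hElt_apply_neg_of_lt_pow hl (by omega)

theorem bijective_window_Ash_neg_hElt (n : ℕ) :
    Function.Bijective fun l : Fin (p ^ n) => window n (Ash p (-n) (hElt p l)) := by
  rw [Fintype.bijective_iff_injective_and_card, Fintype.card_fin, Fintype.card_fun, ZMod.card,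
    Fintype.card_fin]
  refine ⟨fun l l' h => Fin.ext ?_, rfl⟩
  have hmod := Nat.mod_pow_eq_of_digits_eq (b := p) (n := n) fun i hi => by
    simpa [window_Ash_neg_hElt, ZMod.natCast_eq_natCast_iff'] using congrFun h ⟨i, hi⟩
  rwa [Nat.mod_eq_of_lt l.isLt, Nat.mod_eq_of_lt l'.isLt] at hmod

lemma exists_window_eq (n : ℕ) (x : Vil p) :
    ∃ l < p ^ n, window n x = window n (Ash p (-n) (hElt p l)) := by
  obtain ⟨l, hl⟩ := (bijective_window_Ash_neg_hElt n).surjective (window n x)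
  exact ⟨l, l.isLt, hl.symm⟩

lemma mem_Unl_iff_window {n l : ℕ} {x : Vil p} (hx : x ∈ Uset p) (hl : l < p ^ n) :
    x ∈ Unl p n l ↔ window n x = window n (Ash p (-n) (hElt p l)) := by
  rw [mem_Unl_iff, window_eq_window_iff]
  refine ⟨fun h j _ hjn => h j hjn, fun h j hjn => ?_⟩
  rcases le_or_gt j 0 with hj | hj
  · rw [hx j hj, Ash_neg_hElt_mem_Uset hl j hj]
  · exact h j hj hjn

theorem sum_mul_indicator_Unl {n l : ℕ} {x : Vil p} (hx : x ∈ Uset p) (hl : l < p ^ n)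
    (hxl : x ∈ Unl p n l) (c : ℕ → ℂ) :
    ∑ l' ∈ Finset.range (p ^ n), c l' * (Unl p n l').indicator (fun _ => 1) x = c l := by
  rw [Finset.sum_eq_single_of_mem l (Finset.mem_range.mpr hl), Set.indicator_of_mem hxl, mul_one]
  intro l' hl' hne
  rw [Set.indicator_of_notMem, mul_zero]
  intro hxl'
  have hl' := Finset.mem_range.mp hl'
  rw [mem_Unl_iff_window hx hl] at hxl
  rw [mem_Unl_iff_window hx hl', hxl] at hxl'
  exact hne (congrArg Fin.val ((bijective_window_Ash_neg_hElt n).injective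
    (a₁ := ⟨l', hl'⟩) (a₂ := ⟨l, hl⟩) hxl'.symm))

theorem polyphase_Ash_one_congr {N : ℕ} (a : ℕ → ℂ) (s : ℕ) {x y : Vil p}
    (h : window N x = window N y) :
    polyphase p N a s (Ash p 1 x) = polyphase p N a s (Ash p 1 y) :=
  polyphase_congr a s fun i hi => window_eq_window_iff.mp h _ (by omega) (by omega)

end Cosets

theorem statement7_general (p : ℕ) (hp : 2 ≤ p) (n : ℕ) (hn : 1 ≤ n) (r : ℕ)
    (a0 : ℕ → ℂ) (m0 : Vil p → ℂ) (hm0 : IsWalshPolyOfOrder p n a0 m0)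
    (hstar : StarCond p m0)
    (b0 : ℕ → ℕ → ℂ)
    (hb0 : ∀ s l, b0 s l = polyphase p n a0 s (Ash p (1 - (n : ℤ)) (hElt p l))) :
    (∀ l < p ^ n, ∑ s ∈ Finset.range p, ‖b0 s l‖ ^ 2 ≤ 1) ∧
    (∀ (a : Fin (r + 1) → ℕ → ℂ) (mks : Fin (r + 1) → Vil p → ℂ),
      a 0 = a0 → mks 0 = m0 →
      (∀ ν, IsWalshPolyOfOrder p n (a ν) (mks ν)) →
      (UEP p r mks ↔
        ∃ b : Fin (r + 1) → ℕ → ℕ → ℂ,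
          (∀ s l, b 0 s l = b0 s l) ∧
          (∀ (ν : Fin (r + 1)), ∀ s < p, ∀ ω ∈ Uset p,
            polyphase p n (a ν) s (Ash p 1 ω)
              = ∑ l ∈ Finset.range (p ^ n),
                  b ν s l * Set.indicator (Unl p n l) (fun _ => (1 : ℂ)) ω) ∧
          (∀ s < p, ∀ s' < p, ∀ l < p ^ n,
            ∑ ν : Fin (r + 1), b ν s l * (starRingEnd ℂ) (b ν s' l)
              = if s = s' then 1 else 0))) := by
  have : NeZero p := ⟨by omega⟩
  refine ⟨fun l _ => ?_, fun a mks ha0 _ hWP => ?_⟩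
  · simp only [hb0, ← Ash_one_Ash_neg, sum_norm_sq_polyphase hn hm0]
    exact hstar _
  rw [UEP_iff_polyphaseMatrix hn hWP]
  constructor
  · intro hunit
    refine ⟨fun ν s l => polyphase p n (a ν) s (Ash p (1 - n) (hElt p l)),
      fun s l => by simp only [hb0, ha0], fun ν s _ ω hω => ?_, fun s hs s' hs' l _ => ?_⟩
    · obtain ⟨l, hl, hwin⟩ := exists_window_eq n ω
      dsimp only
      rw [sum_mul_indicator_Unl hω hl ((mem_Unl_iff_window hω hl).mpr hwin), ← Ash_one_Ash_neg]
      exact polyphase_Ash_one_congr _ _ hwin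
    · have h := congrFun (congrFun (hunit (Ash p (-n) (hElt p l))) ⟨s, hs⟩) ⟨s', hs'⟩
      simpa [polyphaseMatrix, Matrix.mul_apply, Matrix.one_apply, Ash_one_Ash_neg] using h
  · rintro ⟨b, -, hform, horth⟩ ω
    obtain ⟨l, hl, hwin⟩ := exists_window_eq n ω
    have hval (ν : Fin (r + 1)) (s : Fin p) : polyphaseMatrix p n r a ω s ν = b ν s l := by
      rw [polyphaseMatrix, Matrix.of_apply, polyphase_Ash_one_congr _ _ hwin,
        hform ν s s.isLt _ (Ash_neg_hElt_mem_Uset hl), sum_mul_indicator_Unl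
          (Ash_neg_hElt_mem_Uset hl) hl (Ash_neg_hElt_mem_Unl n l)]
    ext s s'
    simp [Matrix.mul_apply, hval, horth s s.isLt s' s'.isLt l hl, Matrix.one_apply, Fin.ext_iff]

/-- **Corollary 1.**  Let `m_0` be a Walsh polynomial of order `p^n - 1` satisfying
condition (*), and let `b^{(0,s)}_{n,l} = μ_{0,s}(A^{1-n} h_[l])`.  Then
(i) `Σ_s |b^{(0,s)}_{n,l}|² ≤ 1` for every `l`, and
(ii) Walsh polynomials `m_1, …, m_r` of order `p^n - 1` satisfy `M(ω)M(ω)* = I_p` for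
all `ω` iff their polyphase components are `μ_{ν,s}(Aω) = Σ_l b^{(ν,s)}_{n,l} 1_{U_{n,l}}(ω)`
on `U`, with the numbers `b^{(ν,s)}_{n,l}` satisfying the orthonormality relations
`Σ_ν b^{(ν,s)}_{n,l} conj b^{(ν,s')}_{n,l} = δ_{s,s'}`. -/
theorem statement7 (p : ℕ) (hp : 2 ≤ p) (n : ℕ) (hn : 1 ≤ n) (r : ℕ) (hr : p - 1 ≤ r)
    (a0 : ℕ → ℂ) (m0 : Vil p → ℂ) (hm0 : IsWalshPolyOfOrder p n a0 m0)
    (hstar : StarCond p m0)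
    (b0 : ℕ → ℕ → ℂ)
    (hb0 : ∀ s l, b0 s l = polyphase p n a0 s (Ash p (1 - (n : ℤ)) (hElt p l))) :
    (∀ l < p ^ n, ∑ s ∈ Finset.range p, ‖b0 s l‖ ^ 2 ≤ 1) ∧
    (∀ (a : Fin (r + 1) → ℕ → ℂ) (mks : Fin (r + 1) → Vil p → ℂ),
      a 0 = a0 → mks 0 = m0 →
      (∀ ν, IsWalshPolyOfOrder p n (a ν) (mks ν)) →
      (UEP p r mks ↔
        ∃ b : Fin (r + 1) → ℕ → ℕ → ℂ,
          (∀ s l, b 0 s l = b0 s l) ∧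
          (∀ (ν : Fin (r + 1)), ∀ s < p, ∀ ω ∈ Uset p,
            polyphase p n (a ν) s (Ash p 1 ω)
              = ∑ l ∈ Finset.range (p ^ n),
                  b ν s l * Set.indicator (Unl p n l) (fun _ => (1 : ℂ)) ω) ∧
          (∀ s < p, ∀ s' < p, ∀ l < p ^ n,
            ∑ ν : Fin (r + 1), b ν s l * (starRingEnd ℂ) (b ν s' l)
              = if s = s' then 1 else 0))) :=
  statement7_general p hp n hn r a0 m0 hm0 hstar b0 hb0

end Vilenkin
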